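/- Fix a natural number r ≥ 1 and reals ν_1,…,ν_r > -1. Then lim_{n→∞} ₁F_r(-n; ν_1+1,…,ν_r+1; z/n) = ₀F_r(-; ν_1+1,…,ν_r+1; -z) uniformly on compact subsets of ℂ, where ₁F_r(-n; b_1,…,b_r; x) = Σ_{k=0}^{n} (-n)_k x^k / ((b_1)_k···(b_r)_k k!). -/

import Mathlib

/-!
Write the `k`-th term as `c n k • (z ^ k / D k)`, where `D k = (ν_1+1)_k ⋯ (ν_r+1)_k k!` and
`c n k = (-n)_k / n ^ k = ∏_{i<k} (i / n - 1)`. Then `|c n k| ≤ 1` and `c n k → (-1) ^ k`, while on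
a compact set `|z ^ k / D k| ≤ R ^ k / D k`, which is summable because
`D k ≥ (∏_j min (ν_j + 1) 1) · k!`. Tannery's theorem applied to `∑ |c n k - (-1) ^ k| R ^ k / D k`
bounds the difference of the two series uniformly on the set.
-/

open Filter Topology

/-- Rising factorial (Pochhammer symbol). -/
noncomputable def poch (a : ℝ) (m : ℕ) : ℝ := ∏ i ∈ Finset.range m, (a + i)

theorem tendstoUniformlyOn_tsum_smul_of_tendsto {ι α β 𝕜 E : Type*} [NormedField 𝕜]
    [NormedAddCommGroup E] [NormedSpace 𝕜 E] [CompleteSpace E] {l : Filter ι}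
    {c : ι → β → 𝕜} {c₀ : β → 𝕜} {a : β → α → E} {M : β → ℝ} {B : ℝ} {K : Set α}
    (hM : Summable M) (ha : ∀ k, ∀ z ∈ K, ‖a k z‖ ≤ M k)
    (hc : ∀ k, Tendsto (c · k) l (𝓝 (c₀ k))) (hcB : ∀ᶠ n in l, ∀ k, ‖c n k‖ ≤ B) :
    TendstoUniformlyOn (fun n z => ∑' k, c n k • a k z) (fun z => ∑' k, c₀ k • a k z) l K := by
  rcases l.eq_or_neBot with rfl | _
  · exact fun _ _ => Filter.eventually_bot
  have hc₀B (k : β) : ‖c₀ k‖ ≤ B := le_of_tendsto (hc k).norm (hcB.mono fun _ h => h k)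
  have ha' (k : β) (z : α) (hz : z ∈ K) : ‖a k z‖ ≤ |M k| := (ha k z hz).trans (le_abs_self _)
  have hsummable {d : β → 𝕜} (hd : ∀ k, ‖d k‖ ≤ B) (z : α) (hz : z ∈ K) :
      Summable fun k => d k • a k z :=
    (hM.abs.mul_left B).of_norm_bounded fun k => by
      rw [norm_smul]
      exact mul_le_mul (hd k) (ha' k z hz) (norm_nonneg _) ((norm_nonneg _).trans (hd k))
  have hgap_le : ∀ᶠ n in l, ∀ k, ‖c n k - c₀ k‖ * |M k| ≤ 2 * B * |M k| := by
    filter_upwards [hcB] with n hn k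
    gcongr
    linarith [norm_sub_le (c n k) (c₀ k), hn k, hc₀B k]
  have hgap : Tendsto (fun n => ∑' k, ‖c n k - c₀ k‖ * |M k|) l (𝓝 0) := by
    simpa using tendsto_tsum_of_dominated_convergence (hM.abs.mul_left (2 * B))
      (fun k => ((hc k).sub_const (c₀ k)).norm.mul_const |M k|)
      (hgap_le.mono fun n hn k => by rw [Real.norm_of_nonneg (by positivity)]; exact hn k)
  rw [Metric.tendstoUniformlyOn_iff]
  intro ε hε
  filter_upwards [hgap.eventually (gt_mem_nhds hε), hcB, hgap_le] with n hn hnB hnle z hz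
  refine lt_of_le_of_lt ?_ hn
  rw [dist_eq_norm, ← (hsummable hc₀B z hz).tsum_sub (hsummable hnB z hz)]
  refine tsum_of_norm_bounded (Summable.of_nonneg_of_le (fun k => by positivity) hnle
    (hM.abs.mul_left (2 * B))).hasSum fun k => ?_
  rw [← sub_smul, norm_smul, norm_sub_rev]
  exact mul_le_mul_of_nonneg_left (ha' k z hz) (norm_nonneg _)

lemma poch_succ (a : ℝ) (k : ℕ) : poch a (k + 1) = a * poch (a + 1) k := by
  simp only [poch, Finset.prod_range_succ', Nat.cast_add, Nat.cast_zero, Nat.cast_one, add_zero]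
  rw [mul_comm]
  congr 1
  exact Finset.prod_congr rfl fun i _ => by ring

lemma poch_pos {a : ℝ} (ha : 0 < a) (k : ℕ) : 0 < poch a k :=
  Finset.prod_pos fun _ _ => by positivity

lemma one_le_poch {a : ℝ} (ha : 1 ≤ a) (k : ℕ) : 1 ≤ poch a k :=
  Finset.one_le_prod fun i _ => by have : (0 : ℝ) ≤ i := i.cast_nonneg; linarith

lemma min_one_le_poch {a : ℝ} (ha : 0 < a) : ∀ k, min a 1 ≤ poch a k
  | 0 => by simp [poch]
  | k + 1 => by
    rw [poch_succ]
    calc min a 1 ≤ a * 1 := by simp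
      _ ≤ a * poch (a + 1) k := by gcongr; exact one_le_poch (by linarith) k

lemma poch_neg_natCast_of_lt {n k : ℕ} (h : n < k) : poch (-n) k = 0 :=
  Finset.prod_eq_zero (Finset.mem_range.2 h) (by simp)

lemma abs_poch_neg_natCast_le (n k : ℕ) : |poch (-n) k| ≤ (n : ℝ) ^ k := by
  rcases le_or_gt k n with h | h
  · calc |poch (-n) k| = ∏ i ∈ Finset.range k, |-(n : ℝ) + i| := Finset.abs_prod _ _
      _ ≤ ∏ _i ∈ Finset.range k, (n : ℝ) := by
        refine Finset.prod_le_prod (fun i _ => abs_nonneg _) fun i hi => abs_le.2 ⟨?_, ?_⟩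
        · have : (0 : ℝ) ≤ i := i.cast_nonneg; linarith
        · have : (i : ℝ) ≤ n := by exact_mod_cast ((Finset.mem_range.1 hi).le.trans h)
          linarith
      _ = (n : ℝ) ^ k := by simp
  · rw [poch_neg_natCast_of_lt h, abs_zero]
    positivity

lemma abs_poch_neg_natCast_div_pow_le_one (n k : ℕ) : |poch (-n) k / (n : ℝ) ^ k| ≤ 1 := by
  rcases Nat.eq_zero_or_pos k with rfl | hk
  · simp [poch]
  rcases Nat.eq_zero_or_pos n with rfl | hn
  · rw [poch_neg_natCast_of_lt hk]
    simp
  have hpow : (0 : ℝ) < (n : ℝ) ^ k := by positivity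
  rw [abs_div, abs_of_pos hpow, div_le_one hpow]
  exact abs_poch_neg_natCast_le n k

lemma tendsto_poch_neg_natCast_div_pow (k : ℕ) :
    Tendsto (fun n : ℕ => poch (-n) k / (n : ℝ) ^ k) atTop (𝓝 ((-1) ^ k)) := by
  have hfactor (i : ℕ) : Tendsto (fun n : ℕ => (-n + i) / (n : ℝ)) atTop (𝓝 (-1)) := by
    have := (tendsto_const_div_atTop_nhds_zero_nat (i : ℝ)).const_add (-1)
    rw [add_zero] at this
    refine this.congr' ((eventually_ne_atTop 0).mono fun n hn => ?_)
    field_simp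
  have := tendsto_finsetProd (Finset.range k) fun i _ => hfactor i
  simpa [poch, Finset.prod_div_distrib] using this

lemma summable_pow_div_prod_poch_mul_factorial {ι : Type*} [Fintype ι] {b : ι → ℝ}
    (hb : ∀ j, 0 < b j) (R : ℝ) :
    Summable fun k => R ^ k / ((∏ j, poch (b j) k) * k.factorial) := by
  have hc : 0 < ∏ j, min (b j) 1 := Finset.prod_pos fun j _ => lt_min (hb j) one_pos
  refine ((Real.summable_pow_div_factorial |R|).mul_left (∏ j, min (b j) 1)⁻¹).of_norm_bounded
    fun k => ?_
  have hprod : ∏ j, min (b j) 1 ≤ ∏ j, poch (b j) k :=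
    Finset.prod_le_prod (fun j _ => (lt_min (hb j) one_pos).le)
      fun j _ => min_one_le_poch (hb j) k
  have hden : 0 < (∏ j, poch (b j) k) * k.factorial :=
    mul_pos (Finset.prod_pos fun j _ => poch_pos (hb j) k) (mod_cast k.factorial_pos)
  rw [norm_div, norm_pow, Real.norm_eq_abs, Real.norm_of_nonneg hden.le]
  calc |R| ^ k / ((∏ j, poch (b j) k) * k.factorial)
      ≤ |R| ^ k / ((∏ j, min (b j) 1) * k.factorial) := by gcongr
    _ = (∏ j, min (b j) 1)⁻¹ * (|R| ^ k / k.factorial) := by ring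

theorem oneF_r_tendsto_zeroF_r_general (r : ℕ) (ν : Fin r → ℝ)
    (hν : ∀ j, ν j > -1) :
    ∀ K : Set ℂ, IsCompact K →
      TendstoUniformlyOn
        (fun (n : ℕ) (z : ℂ) => ∑ k ∈ Finset.range (n + 1),
          (poch (-(n : ℝ)) k : ℂ) * (z / (n : ℂ)) ^ k /
            ((∏ j, (poch (ν j + 1) k : ℂ)) * (k.factorial : ℂ)))
        (fun z : ℂ => ∑' k : ℕ,
          (-z) ^ k / ((∏ j, (poch (ν j + 1) k : ℂ)) * (k.factorial : ℂ)))
        atTop K := by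
  intro K hK
  obtain ⟨R, hR⟩ := hK.isBounded.exists_norm_le
  have hb (j : Fin r) : 0 < ν j + 1 := by linarith [hν j]
  set D : ℕ → ℝ := fun k => (∏ j, poch (ν j + 1) k) * k.factorial
  have hDpos (k : ℕ) : 0 < D k :=
    mul_pos (Finset.prod_pos fun j _ => poch_pos (hb j) k) (mod_cast k.factorial_pos)
  have key := tendstoUniformlyOn_tsum_smul_of_tendsto (l := atTop) (K := K) (B := 1)
    (c := fun (n : ℕ) k => poch (-n) k / (n : ℝ) ^ k) (c₀ := fun k => (-1 : ℝ) ^ k)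
    (a := fun k (z : ℂ) => z ^ k / (D k : ℂ)) (M := fun k => R ^ k / D k)
    (summable_pow_div_prod_poch_mul_factorial hb R)
    (fun k z hz => by
      rw [norm_div, norm_pow, Complex.norm_real, Real.norm_of_nonneg (hDpos k).le]
      exact div_le_div_of_nonneg_right (pow_le_pow_left₀ (norm_nonneg z) (hR z hz) k)
        (hDpos k).le)
    tendsto_poch_neg_natCast_div_pow
    (Eventually.of_forall fun n k => abs_poch_neg_natCast_div_pow_le_one n k)
  refine (key.congr (Eventually.of_forall fun n z _ => ?_)).congr_right fun z _ => ?_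
  · dsimp only
    rw [tsum_eq_sum (s := Finset.range (n + 1)) fun k hk => by
      rw [Finset.mem_range, not_lt] at hk
      rw [poch_neg_natCast_of_lt (by omega), zero_div, zero_smul]]
    refine Finset.sum_congr rfl fun k _ => ?_
    simp only [D, Complex.real_smul, div_pow]
    push_cast
    ring
  · refine tsum_congr fun k => ?_
    simp only [D, Complex.real_smul, neg_pow z]
    push_cast
    ring

/-- `₁F_r(-n; ν_1+1,…,ν_r+1; z/n) → ₀F_r(-; ν_1+1,…,ν_r+1; -z)` uniformly on compact
subsets of `ℂ`. -/
theorem oneF_r_tendsto_zeroF_r (r : ℕ) (hr : 1 ≤ r) (ν : Fin r → ℝ)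
    (hν : ∀ j, ν j > -1) :
    ∀ K : Set ℂ, IsCompact K →
      TendstoUniformlyOn
        (fun (n : ℕ) (z : ℂ) => ∑ k ∈ Finset.range (n + 1),
          (poch (-(n : ℝ)) k : ℂ) * (z / (n : ℂ)) ^ k /
            ((∏ j, (poch (ν j + 1) k : ℂ)) * (k.factorial : ℂ)))
        (fun z : ℂ => ∑' k : ℕ,
          (-z) ^ k / ((∏ j, (poch (ν j + 1) k : ℂ)) * (k.factorial : ℂ)))
        atTop K :=
  oneF_r_tendsto_zeroF_r_general r ν hν
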